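/- arXiv:2006.07835 — 9 statements merged into one kernel-verified Lean document; each statement's English description precedes it below -/
import Mathlib

section
/- There do not exist holomorphic vector fields e4, e5 defined on a connected open neighborhood of 0 in ℂ³ such that, with e1 = ∂/∂z1, e2 = ∂/∂z2, e3 = ∂/∂w, the following Lie bracket relations hold: [e1,e4] = e1, [e2,e4] = e2, [e3,e4] = 0, [e1,e5] = −e2, [e2,e5] = e1, [e3,e5] = 0, and [e4,e5] = e3. (Hence the 5-dimensional Lie algebra g_{5,39} admits no holomorphic realization in ℂ³ in which e1, e2, e3 are simultaneously straightened to the coordinate vector fields.) -/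
open Complex

/-- A holomorphic vector field on (an open subset of) `ℂ³` is a map `ℂ³ → ℂ³`;
the Lie bracket of two such fields. -/
noncomputable def lieBrk (X Y : ℂ × ℂ × ℂ → ℂ × ℂ × ℂ) (p : ℂ × ℂ × ℂ) : ℂ × ℂ × ℂ :=
  fderiv ℂ Y p (X p) - fderiv ℂ X p (Y p)

/-- The coordinate vector fields `∂/∂z1`, `∂/∂z2`, `∂/∂w`. -/
def E1 : ℂ × ℂ × ℂ → ℂ × ℂ × ℂ := fun _ => (1, 0, 0)
def E2 : ℂ × ℂ × ℂ → ℂ × ℂ × ℂ := fun _ => (0, 1, 0)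
def E3 : ℂ × ℂ × ℂ → ℂ × ℂ × ℂ := fun _ => (0, 0, 1)

lemma basis_decomp (e : ℂ × ℂ × ℂ → ℂ × ℂ × ℂ) (p v : ℂ × ℂ × ℂ) :
    fderiv ℂ e p v = v.1 • fderiv ℂ e p (1,0,0) + v.2.1 • fderiv ℂ e p (0,1,0)
      + v.2.2 • fderiv ℂ e p (0,0,1) := by
  have hv : v = v.1 • ((1:ℂ),(0:ℂ),(0:ℂ)) + v.2.1 • ((0:ℂ),(1:ℂ),(0:ℂ))
      + v.2.2 • ((0:ℂ),(0:ℂ),(1:ℂ)) := by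
    simp [Prod.ext_iff]
  conv_lhs => rw [hv]
  simp only [map_add, map_smul]

/-- The algebra `g_{5,39}` admits no holomorphic realization in `ℂ³` with
`e1, e2, e3` straightened to the coordinate vector fields. -/
theorem stmt1 :
    ¬ ∃ (U : Set (ℂ × ℂ × ℂ)) (e4 e5 : ℂ × ℂ × ℂ → ℂ × ℂ × ℂ),
      IsOpen U ∧ IsConnected U ∧ (0 : ℂ × ℂ × ℂ) ∈ U ∧
      DifferentiableOn ℂ e4 U ∧ DifferentiableOn ℂ e5 U ∧
      (∀ p ∈ U, lieBrk E1 e4 p = E1 p) ∧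
      (∀ p ∈ U, lieBrk E2 e4 p = E2 p) ∧
      (∀ p ∈ U, lieBrk E3 e4 p = 0) ∧
      (∀ p ∈ U, lieBrk E1 e5 p = - E2 p) ∧
      (∀ p ∈ U, lieBrk E2 e5 p = E1 p) ∧
      (∀ p ∈ U, lieBrk E3 e5 p = 0) ∧
      (∀ p ∈ U, lieBrk e4 e5 p = E3 p) := by
  rintro ⟨U, e4, e5, hU, hconn, h0, hd4, hd5, H1, H2, H3, H4, H5, H6, H7⟩
  have h1 := H1 0 h0
  have h2 := H2 0 h0
  have h3 := H3 0 h0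
  have h4 := H4 0 h0
  have h5 := H5 0 h0
  have h6 := H6 0 h0
  have h7 := H7 0 h0
  have c1 : fderiv ℂ E1 0 = 0 := fderiv_const_apply _
  have c2 : fderiv ℂ E2 0 = 0 := fderiv_const_apply _
  have c3 : fderiv ℂ E3 0 = 0 := fderiv_const_apply _
  simp only [lieBrk, E1, E2, E3, c1, c2, c3,
    ContinuousLinearMap.zero_apply, sub_zero] at h1 h2 h3 h4 h5 h6 h7
  rw [basis_decomp e5 0 (e4 0), basis_decomp e4 0 (e5 0), h1, h2, h3, h4, h5, h6] at h7
  have := congrArg (fun v : ℂ × ℂ × ℂ => v.2.2) h7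
  simp at this
end

section
/- There do not exist holomorphic vector fields e4, e5 defined on a connected open neighborhood of 0 in ℂ³ such that, with e1 = ∂/∂z1, e2 = ∂/∂z2, e3 = ∂/∂w, the relations [e1,e4] = e1, [e2,e4] = 0, [e3,e4] = 0, [e1,e5] = 0, [e2,e5] = e2, [e3,e5] = 0 and [e4,e5] = e3 hold. (Hence the Lie algebra g_{5,38} admits no holomorphic realization in ℂ³ with e1, e2, e3 straightened to coordinate fields.) -/
open Complex

/-- The algebra `g_{5,38}` admits no holomorphic realization in `ℂ³` with
`e1, e2, e3` straightened to the coordinate vector fields. -/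
theorem stmt2 :
    ¬ ∃ (U : Set (ℂ × ℂ × ℂ)) (e4 e5 : ℂ × ℂ × ℂ → ℂ × ℂ × ℂ),
      IsOpen U ∧ IsConnected U ∧ (0 : ℂ × ℂ × ℂ) ∈ U ∧
      DifferentiableOn ℂ e4 U ∧ DifferentiableOn ℂ e5 U ∧
      (∀ p ∈ U, lieBrk E1 e4 p = E1 p) ∧
      (∀ p ∈ U, lieBrk E2 e4 p = 0) ∧
      (∀ p ∈ U, lieBrk E3 e4 p = 0) ∧
      (∀ p ∈ U, lieBrk E1 e5 p = 0) ∧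
      (∀ p ∈ U, lieBrk E2 e5 p = E2 p) ∧
      (∀ p ∈ U, lieBrk E3 e5 p = 0) ∧
      (∀ p ∈ U, lieBrk e4 e5 p = E3 p) := by
  rintro ⟨U, e4, e5, hU, hconn, h0, hd4, hd5, h14, h24, h34, h15, h25, h35, h45⟩
  have fE1 : fderiv ℂ E1 (0 : ℂ × ℂ × ℂ) = 0 := fderiv_const_apply _
  have fE2 : fderiv ℂ E2 (0 : ℂ × ℂ × ℂ) = 0 := fderiv_const_apply _
  have fE3 : fderiv ℂ E3 (0 : ℂ × ℂ × ℂ) = 0 := fderiv_const_apply _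
  have b14 : fderiv ℂ e4 0 (1, 0, 0) = (1, 0, 0) := by
    simpa [lieBrk, E1, fE1] using h14 0 h0
  have b24 : fderiv ℂ e4 0 (0, 1, 0) = 0 := by
    simpa [lieBrk, E2, fE2] using h24 0 h0
  have b34 : fderiv ℂ e4 0 (0, 0, 1) = 0 := by
    simpa [lieBrk, E3, fE3] using h34 0 h0
  have b15 : fderiv ℂ e5 0 (1, 0, 0) = 0 := by
    simpa [lieBrk, E1, fE1] using h15 0 h0
  have b25 : fderiv ℂ e5 0 (0, 1, 0) = (0, 1, 0) := by
    simpa [lieBrk, E2, fE2] using h25 0 h0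
  have b35 : fderiv ℂ e5 0 (0, 0, 1) = 0 := by
    simpa [lieBrk, E3, fE3] using h35 0 h0
  have expand : ∀ (L : (ℂ × ℂ × ℂ) →L[ℂ] (ℂ × ℂ × ℂ)) (v : ℂ × ℂ × ℂ),
      L v = v.1 • L (1, 0, 0) + v.2.1 • L (0, 1, 0) + v.2.2 • L (0, 0, 1) := by
    intro L v
    have hv : v = v.1 • ((1 : ℂ), (0 : ℂ), (0 : ℂ)) + v.2.1 • (0, 1, 0)
        + v.2.2 • (0, 0, 1) := by
      simp [Prod.ext_iff]
    rw [← L.map_smul, ← L.map_smul, ← L.map_smul, ← L.map_add, ← L.map_add, ← hv]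
  have key := h45 0 h0
  rw [lieBrk, expand (fderiv ℂ e5 0) (e4 0), expand (fderiv ℂ e4 0) (e5 0),
    b14, b24, b34, b15, b25, b35] at key
  have := congrArg (fun v : ℂ × ℂ × ℂ => v.2.2) key
  simp [E3] at this
end

section
/- The five holomorphic vector fields on ℂ³ given by e1 = (1,0,0), e2 = (2z1, −z2, w), e3 = (−z1², z1 z2 − w, −z1 w), e4 = (0, 1, z1), e5 = (0, 0, 1) satisfy the commutation relations of the unique non-solvable indecomposable 5-dimensional real Lie algebra g₅: [e1,e2] = 2e1, [e1,e3] = −e2, [e1,e4] = e5, [e1,e5] = 0, [e2,e3] = 2e3, [e2,e4] = e4, [e2,e5] = −e5, [e3,e4] = 0, [e3,e5] = e4, [e4,e5] = 0. -/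
open Complex

def e1 : ℂ × ℂ × ℂ → ℂ × ℂ × ℂ := fun _ => (1, 0, 0)
def e2 : ℂ × ℂ × ℂ → ℂ × ℂ × ℂ := fun p => (2 * p.1, -p.2.1, p.2.2)
def e3 : ℂ × ℂ × ℂ → ℂ × ℂ × ℂ := fun p => (-(p.1 ^ 2), p.1 * p.2.1 - p.2.2, -(p.1 * p.2.2))
def e4 : ℂ × ℂ × ℂ → ℂ × ℂ × ℂ := fun p => (0, 1, p.1)
def e5 : ℂ × ℂ × ℂ → ℂ × ℂ × ℂ := fun _ => (0, 0, 1)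

lemma hasFDerivAt_coords {𝕜 : Type*} [NontriviallyNormedField 𝕜] (p : 𝕜 × 𝕜 × 𝕜) :
    HasFDerivAt (fun q : 𝕜 × 𝕜 × 𝕜 => q.1) (ContinuousLinearMap.fst 𝕜 𝕜 (𝕜 × 𝕜)) p ∧
    HasFDerivAt (fun q : 𝕜 × 𝕜 × 𝕜 => q.2.1)
      ((ContinuousLinearMap.fst 𝕜 𝕜 𝕜).comp (ContinuousLinearMap.snd 𝕜 𝕜 (𝕜 × 𝕜))) p ∧
    HasFDerivAt (fun q : 𝕜 × 𝕜 × 𝕜 => q.2.2)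
      ((ContinuousLinearMap.snd 𝕜 𝕜 𝕜).comp (ContinuousLinearMap.snd 𝕜 𝕜 (𝕜 × 𝕜))) p :=
  ⟨hasFDerivAt_fst, hasFDerivAt_snd.fst, hasFDerivAt_snd.snd⟩

section

variable (p v : ℂ × ℂ × ℂ)

lemma fderiv_e1 : fderiv ℂ e1 p = 0 :=
  fderiv_const_apply _

lemma fderiv_e2_apply : fderiv ℂ e2 p v = (2 * v.1, -v.2.1, v.2.2) := by
  obtain ⟨hx, hy, hz⟩ := hasFDerivAt_coords p
  have h : HasFDerivAt e2 _ p := (hx.const_mul 2).prodMk (hy.neg.prodMk hz)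
  simp [h.fderiv]

lemma fderiv_e3_apply : fderiv ℂ e3 p v =
    (-(2 * p.1 * v.1), p.1 * v.2.1 + p.2.1 * v.1 - v.2.2, -(p.1 * v.2.2 + p.2.2 * v.1)) := by
  obtain ⟨hx, hy, hz⟩ := hasFDerivAt_coords p
  have h : HasFDerivAt e3 _ p :=
    (hx.pow 2).neg.prodMk (((hx.mul hy).sub hz).prodMk (hx.mul hz).neg)
  simp [h.fderiv]

lemma fderiv_e4_apply : fderiv ℂ e4 p v = (0, 0, v.1) := by
  have h : HasFDerivAt e4 _ p :=
    (hasFDerivAt_const 0 p).prodMk ((hasFDerivAt_const 1 p).prodMk (hasFDerivAt_coords p).1)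
  simp [h.fderiv]

lemma fderiv_e5 : fderiv ℂ e5 p = 0 :=
  fderiv_const_apply _

end

/-- The fields `e1,…,e5` realize the non-solvable indecomposable 5-dimensional
Lie algebra `g₅` in `ℂ³`. -/
theorem stmt3 :
    (∀ p, lieBrk e1 e2 p = (2 : ℂ) • e1 p) ∧
    (∀ p, lieBrk e1 e3 p = - e2 p) ∧
    (∀ p, lieBrk e1 e4 p = e5 p) ∧
    (∀ p, lieBrk e1 e5 p = 0) ∧
    (∀ p, lieBrk e2 e3 p = (2 : ℂ) • e3 p) ∧
    (∀ p, lieBrk e2 e4 p = e4 p) ∧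
    (∀ p, lieBrk e2 e5 p = - e5 p) ∧
    (∀ p, lieBrk e3 e4 p = 0) ∧
    (∀ p, lieBrk e3 e5 p = e4 p) ∧
    (∀ p, lieBrk e4 e5 p = 0) := by
  refine ⟨?_, ?_, ?_, ?_, ?_, ?_, ?_, ?_, ?_, ?_⟩ <;> intro p <;>
    simp only [lieBrk, fderiv_e1, fderiv_e2_apply, fderiv_e3_apply, fderiv_e4_apply, fderiv_e5,
      zero_apply] <;>
    ext <;> simp [e1, e2, e3, e4, e5] <;> ring
end

section
/- Each of the five holomorphic vector fields e1 = (1,0,0), e2 = (2z1, −z2, w), e3 = (−z1², z1 z2 − w, −z1 w), e4 = (0,1,z1), e5 = (0,0,1) on ℂ³ is tangent to the real hypersurface M = {Φ = 0}, where Φ(z1,z2,w) = (v − x2 y1)² + y1² y2² − y1; that is, for each k, the real vector field X_k associated to e_k satisfies X_k(Φ) = 0 at every point of M. -/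
/-!
`Φ` depends neither on `x1` nor on `u`, and is invariant under the flow
`(z1, z2, w) ↦ (z1, z2 + t, w + t z1)` of `e4`, so `X1`, `X4` and `X5` annihilate it identically.
`Φ` is weighted homogeneous of degree 2 for the weights `(2, -1, 1)` of `e2`, so `X2 Φ = 2 Φ`,
and a direct computation gives `X3 Φ = -2 x1 Φ`. All five therefore vanish on `{Φ = 0}`.
-/

open Complex

/-- The defining function `Φ = (v − x2 y1)² + y1² y2² − y1` of the hypersurface `M`,
where `z1 = x1 + i y1`, `z2 = x2 + i y2`, `w = u + i v`. -/
noncomputable def Φ : ℂ × ℂ × ℂ → ℝ := fun p =>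
  (p.2.2.im - p.2.1.re * p.1.im) ^ 2 + p.1.im ^ 2 * p.2.1.im ^ 2 - p.1.im

open ContinuousLinearMap in
theorem fderiv_Φ_apply (p q : ℂ × ℂ × ℂ) :
    fderiv ℝ Φ p q =
      2 * (p.2.2.im - p.2.1.re * p.1.im) *
        (q.2.2.im - q.2.1.re * p.1.im - p.2.1.re * q.1.im) +
      2 * p.1.im * p.2.1.im * (q.1.im * p.2.1.im + p.1.im * q.2.1.im) - q.1.im := by
  have y₁ := (imCLM ∘L fst ℝ ℂ (ℂ × ℂ)).hasFDerivAt (x := p)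
  have x₂ := (reCLM ∘L fst ℝ ℂ ℂ ∘L snd ℝ ℂ (ℂ × ℂ)).hasFDerivAt (x := p)
  have y₂ := (imCLM ∘L fst ℝ ℂ ℂ ∘L snd ℝ ℂ (ℂ × ℂ)).hasFDerivAt (x := p)
  have v := (imCLM ∘L snd ℝ ℂ ℂ ∘L snd ℝ ℂ (ℂ × ℂ)).hasFDerivAt (x := p)
  have hΦ : HasFDerivAt Φ _ p :=
    (((v.sub (x₂.mul y₁)).pow 2).add ((y₁.pow 2).mul (y₂.pow 2))).sub y₁
  rw [hΦ.fderiv]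
  simp only [Pi.sub_apply, comp_apply, coe_snd', imCLM_apply, Pi.mul_apply, coe_fst',
    reCLM_apply, Nat.add_one_sub_one, pow_one, nsmul_eq_mul, Nat.cast_ofNat, sub_apply,
    add_apply, smul_apply, smul_eq_mul, sub_left_inj]
  ring

theorem fderiv_Φ_e1 (p : ℂ × ℂ × ℂ) : fderiv ℝ Φ p (e1 p) = 0 := by
  simp [fderiv_Φ_apply, e1]

theorem fderiv_Φ_e2 (p : ℂ × ℂ × ℂ) : fderiv ℝ Φ p (e2 p) = 2 * Φ p := by
  simp only [e2, fderiv_Φ_apply, neg_re, neg_mul, sub_neg_eq_add, mul_im, re_ofNat, im_ofNat,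
    zero_mul, add_zero, neg_im, mul_neg, Φ]
  ring

theorem fderiv_Φ_e3 (p : ℂ × ℂ × ℂ) : fderiv ℝ Φ p (e3 p) = -2 * p.1.re * Φ p := by
  simp only [e3, pow_two, fderiv_Φ_apply, neg_im, mul_im, neg_add_rev, sub_re, mul_re, sub_im,
    neg_mul, Φ]
  ring

theorem fderiv_Φ_e4 (p : ℂ × ℂ × ℂ) : fderiv ℝ Φ p (e4 p) = 0 := by
  simp [fderiv_Φ_apply, e4]

theorem fderiv_Φ_e5 (p : ℂ × ℂ × ℂ) : fderiv ℝ Φ p (e5 p) = 0 := by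
  simp [fderiv_Φ_apply, e5]

/-- Each of the five fields `e1,…,e5` is tangent to `M = {Φ = 0}`: the associated real
vector field (which, identifying `ℂ³ ≅ ℝ⁶`, is the real tangent vector `e_k p`)
annihilates `Φ` at every point of `M`. -/
theorem stmt4 (p : ℂ × ℂ × ℂ) (hp : Φ p = 0) :
    fderiv ℝ Φ p (e1 p) = 0 ∧ fderiv ℝ Φ p (e2 p) = 0 ∧ fderiv ℝ Φ p (e3 p) = 0 ∧
    fderiv ℝ Φ p (e4 p) = 0 ∧ fderiv ℝ Φ p (e5 p) = 0 := by
  simp [fderiv_Φ_e1, fderiv_Φ_e2, fderiv_Φ_e3, fderiv_Φ_e4, fderiv_Φ_e5, hp]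
end

section
/- The holomorphic map φ(z1, z2, w) = (−w, Log z2, z1), defined on the domain {Re z2 > 0} ⊂ ℂ³, carries the hypersurface {v·y2 + y1·x2 = 0, Re z2 > 0} into the tube hypersurface {Im w' = Im z1' · tan(Im z2')}: a point (z1,z2,w) with Re z2 > 0 satisfies Im w · Im z2 + Im z1 · Re z2 = 0 if and only if its image (z1',z2',w') = (−w, Log z2, z1) satisfies Im w' = Im z1' · tan(Im z2'). -/
open Complex

/-- The map `φ(z1,z2,w) = (−w, Log z2, z1)` on `{Re z2 > 0}` carries the hypersurface
`{v y2 + y1 x2 = 0}` into the tube `{Im w' = Im z1' · tan (Im z2')}`. -/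
theorem stmt7 (z1 z2 w : ℂ) (h : 0 < z2.re) :
    w.im * z2.im + z1.im * z2.re = 0 ↔
      z1.im = (-w).im * Real.tan ((Complex.log z2).im) := by
  rw [Complex.log_im, Complex.tan_arg, Complex.neg_im]
  have hne : z2.re ≠ 0 := h.ne'
  field_simp
  constructor <;> intro H <;> linarith
end

section
/- Let c31, c32 ∈ ℝ and let F be a C¹ real-valued function on a connected open subset of {(y1, y2) ∈ ℝ² : y2 > 0}. Then F satisfies the system y2 ∂F/∂y1 = c32 and 2 y1 ∂F/∂y1 + y2 ∂F/∂y2 = F + c31 y2 if and only if there is a constant D ∈ ℝ such that F(y1, y2) = c32 · y1/y2 + c31 · y2 · ln y2 + D · y2. -/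
/-!
`c32 y1/y2 + c31 y2 ln y2` is a particular solution and the system is affine in `F`, so
`h = F - c32 y1/y2 - c31 y2 ln y2` solves the homogeneous system `∂h/∂y1 = 0`, `y2 ∂h/∂y2 = h`,
which says exactly that `h / y2` has vanishing differential. On a connected open set, `h / y2` is
then a constant `D`.
-/

open Real Filter Topology

theorem IsOpen.exists_eq_const_iff_fderiv_eq_zero {𝕜 E G : Type*} [NontriviallyNormedField 𝕜]
    [IsRCLikeNormedField 𝕜] [NormedAddCommGroup E] [NormedSpace ℝ E] [NormedSpace 𝕜 E]
    [NormedAddCommGroup G] [NormedSpace 𝕜 G] {f : E → G} {s : Set E} (hs : IsOpen s)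
    (hs' : IsPreconnected s) (hf : DifferentiableOn 𝕜 f s) :
    (∃ a, ∀ x ∈ s, f x = a) ↔ s.EqOn (fderiv 𝕜 f) 0 := by
  refine ⟨fun ⟨a, ha⟩ x hx => ?_, hs.exists_is_const_of_fderiv_eq_zero hs' hf⟩
  have hloc : f =ᶠ[𝓝 x] fun _ => a := eventually_of_mem (hs.mem_nhds hx) ha
  rw [hloc.fderiv_eq, fderiv_const_apply, Pi.zero_apply]

theorem ContinuousLinearMap.eq_zero_iff_apply_one_zero_apply_zero_one {R M : Type*} [Semiring R]
    [TopologicalSpace R] [AddCommMonoid M] [TopologicalSpace M] [Module R M]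
    (L : R × R →L[R] M) : L = 0 ↔ L (1, 0) = 0 ∧ L (0, 1) = 0 := by
  refine ⟨fun h => by simp [h], fun ⟨h₁, h₂⟩ => ContinuousLinearMap.ext fun v => ?_⟩
  have hv : v = v.1 • ((1 : R), (0 : R)) + v.2 • ((0 : R), (1 : R)) := by simp
  rw [hv, map_add, map_smul, map_smul, h₁, h₂]
  simp

section DivSnd

variable {𝕜 : Type*} [NontriviallyNormedField 𝕜] {h : 𝕜 × 𝕜 → 𝕜} {p : 𝕜 × 𝕜}

theorem HasFDerivAt.div_snd {h' : 𝕜 × 𝕜 →L[𝕜] 𝕜} (hh : HasFDerivAt h h' p) (hp : p.2 ≠ 0) :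
    HasFDerivAt (fun q => h q / q.2)
      (h p • (-(p.2 ^ 2)⁻¹) • ContinuousLinearMap.snd 𝕜 𝕜 𝕜 + (p.2)⁻¹ • h') p := by
  have hinv : HasFDerivAt (fun q : 𝕜 × 𝕜 => (q.2)⁻¹)
      ((-(p.2 ^ 2)⁻¹) • ContinuousLinearMap.snd 𝕜 𝕜 𝕜) p :=
    (hasDerivAt_inv hp).comp_hasFDerivAt p hasFDerivAt_snd
  simpa only [div_eq_mul_inv] using hh.fun_mul hinv

theorem fderiv_div_snd_eq_zero_iff (hh : DifferentiableAt 𝕜 h p) (hp : p.2 ≠ 0) :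
    fderiv 𝕜 (fun q => h q / q.2) p = 0 ↔
      fderiv 𝕜 h p (1, 0) = 0 ∧ p.2 * fderiv 𝕜 h p (0, 1) = h p := by
  rw [(hh.hasFDerivAt.div_snd hp).fderiv,
    ContinuousLinearMap.eq_zero_iff_apply_one_zero_apply_zero_one]
  simp only [add_apply, smul_apply, ContinuousLinearMap.coe_snd', smul_eq_mul, mul_zero, zero_add,
    mul_eq_zero, inv_eq_zero, hp, false_or, mul_one, mul_neg]
  refine and_congr_right' ?_
  field_simp
  rw [mul_zero, neg_add_eq_zero, eq_comm]

end DivSnd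

noncomputable def particularSolution (c31 c32 : ℝ) (q : ℝ × ℝ) : ℝ :=
  c32 * q.1 / q.2 + c31 * q.2 * log q.2

theorem hasFDerivAt_particularSolution (c31 c32 : ℝ) {p : ℝ × ℝ} (hp : p.2 ≠ 0) :
    HasFDerivAt (particularSolution c31 c32)
      ((c32 / p.2) • ContinuousLinearMap.fst ℝ ℝ ℝ +
        (-(c32 * p.1) / p.2 ^ 2 + c31 * (log p.2 + 1)) • ContinuousLinearMap.snd ℝ ℝ ℝ) p := by
  refine ((hasFDerivAt_fst.const_mul c32).div_snd hp |>.fun_add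
    ((hasFDerivAt_snd.const_mul c31).fun_mul (hasFDerivAt_snd.log hp))).congr_fderiv
    (ContinuousLinearMap.ext fun v => ?_)
  simp only [add_apply, smul_apply, ContinuousLinearMap.coe_snd', ContinuousLinearMap.coe_fst',
    smul_eq_mul, neg_mul, mul_neg]
  field_simp
  ring

theorem fderiv_sub_particularSolution_div_snd_eq_zero_iff {c31 c32 : ℝ} {F : ℝ × ℝ → ℝ}
    {p : ℝ × ℝ} (hF : DifferentiableAt ℝ F p) (hp : p.2 ≠ 0) :
    fderiv ℝ (fun q => (F q - particularSolution c31 c32 q) / q.2) p = 0 ↔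
      p.2 * fderiv ℝ F p (1, 0) = c32 ∧
        2 * p.1 * fderiv ℝ F p (1, 0) + p.2 * fderiv ℝ F p (0, 1) = F p + c31 * p.2 := by
  have hP := hasFDerivAt_particularSolution c31 c32 hp
  rw [fderiv_div_snd_eq_zero_iff (h := fun q => F q - particularSolution c31 c32 q)
    (hF.sub hP.differentiableAt) hp, fderiv_fun_sub hF hP.differentiableAt, hP.fderiv]
  simp only [sub_apply, add_apply, smul_apply, ContinuousLinearMap.coe_fst', smul_eq_mul, mul_one,
    ContinuousLinearMap.coe_snd', mul_zero, add_zero, zero_add, particularSolution]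
  have h₁ : fderiv ℝ F p (1, 0) - c32 / p.2 = 0 ↔ p.2 * fderiv ℝ F p (1, 0) = c32 := by
    rw [sub_eq_zero, eq_div_iff hp, mul_comm]
  rw [h₁]
  refine and_congr_right fun ha => ?_
  subst ha
  field_simp
  constructor <;> intro h <;> linarith

/-- On a connected open subset of the half-plane `{y2 > 0}`, a `C¹` function `F`
satisfies `y2 ∂F/∂y1 = c32` and `2 y1 ∂F/∂y1 + y2 ∂F/∂y2 = F + c31 y2` iff
`F(y1,y2) = c32 y1/y2 + c31 y2 ln y2 + D y2` for some constant `D`. -/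
theorem stmt11 (c31 c32 : ℝ) (U : Set (ℝ × ℝ)) (hUopen : IsOpen U)
    (hUconn : IsConnected U) (hU : ∀ p ∈ U, 0 < p.2)
    (F : ℝ × ℝ → ℝ) (hF : ContDiffOn ℝ 1 F U) :
    ((∀ p ∈ U, p.2 * fderiv ℝ F p (1, 0) = c32) ∧
      (∀ p ∈ U, 2 * p.1 * fderiv ℝ F p (1, 0) + p.2 * fderiv ℝ F p (0, 1) =
        F p + c31 * p.2)) ↔
      ∃ D : ℝ, ∀ p ∈ U,
        F p = c32 * p.1 / p.2 + c31 * p.2 * Real.log p.2 + D * p.2 := by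
  have hp : ∀ p ∈ U, p.2 ≠ 0 := fun p hpU => (hU p hpU).ne'
  have hFd : ∀ p ∈ U, DifferentiableAt ℝ F p := fun p hpU =>
    (hF.differentiableOn one_ne_zero p hpU).differentiableAt (hUopen.mem_nhds hpU)
  set G : ℝ × ℝ → ℝ := fun q => (F q - particularSolution c31 c32 q) / q.2
  have hG : DifferentiableOn ℝ G U := fun p hpU =>
    (((hFd p hpU).hasFDerivAt.sub (hasFDerivAt_particularSolution c31 c32 (hp p hpU))).div_snd
      (hp p hpU)).differentiableAt.differentiableWithinAt
  calc _ ↔ U.EqOn (fderiv ℝ G) 0 := by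
        rw [← forall₂_and]
        exact forall₂_congr fun p hpU =>
          (fderiv_sub_particularSolution_div_snd_eq_zero_iff (hFd p hpU) (hp p hpU)).symm
    _ ↔ ∃ D, ∀ p ∈ U, G p = D :=
        (hUopen.exists_eq_const_iff_fderiv_eq_zero hUconn.isPreconnected hG).symm
    _ ↔ _ := exists_congr fun D => forall₂_congr fun p hpU => by
        rw [div_eq_iff (hp p hpU), sub_eq_iff_eq_add']
        rfl
end

section
/- Let λ ∈ ℝ \ {0}, α ∈ ℝ, ε ∈ {1, −1}, B = (−α+iε)/λ, β = 1 − λ. Define holomorphic vector fields on ℂ³: e1 = e^{λ z2}(1, 0, iε), e2 = (1,0,0), e3 = (0,0,1), e4 = (z1, 1, w), e5 = (w, B, −z1), e6 = e^{−λ z2}(1, 0, −iε). Then the following bracket identities hold: [e1,e4] = β e1, [e2,e4] = e2, [e3,e4] = e3, [e4,e6] = (β−2) e6, [e1,e5] = α e1, [e2,e5] = −e3, [e3,e5] = e2, [e4,e5] = 0, [e1,e2] = [e1,e3] = [e2,e3] = 0, [e1,e6] = [e2,e6] = [e3,e6] = 0. -/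
open Complex

/-!
Each field is either affine or of the form `e^{c z₂}(1, 0, a)`, whose derivative in a direction `v`
is `c v₂` times the field itself, so every bracket reduces to algebra in the coefficients. The only
relation that uses the parameters is `[e1, e5] = α e1`: there `λB = iε - α` and `(iε)² = -1`.
-/

namespace VectorField3

/-- `e^{c z₂} (∂_{z₁} + a ∂_w)`: here `e1 = expField λ (iε)` and `e6 = expField (-λ) (-iε)`. -/
noncomputable def expField (c a : ℂ) (q : ℂ × ℂ × ℂ) : ℂ × ℂ × ℂ :=
  (exp (c * q.2.1), 0, a * exp (c * q.2.1))

def constField (d : ℂ × ℂ × ℂ) (_ : ℂ × ℂ × ℂ) : ℂ × ℂ × ℂ := d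

def scalingField (q : ℂ × ℂ × ℂ) : ℂ × ℂ × ℂ := (q.1, 1, q.2.2)

def rotationField (B : ℂ) (q : ℂ × ℂ × ℂ) : ℂ × ℂ × ℂ := (q.2.2, B, -q.1)

lemma fderiv_constField (d p : ℂ × ℂ × ℂ) : fderiv ℂ (constField d) p = 0 :=
  fderiv_const_apply d

lemma fderiv_expField_apply (c a : ℂ) (p v : ℂ × ℂ × ℂ) :
    fderiv ℂ (expField c a) p v = (c * v.2.1) • expField c a p := by
  let z₂ : (ℂ × ℂ × ℂ) →L[ℂ] ℂ :=
    (ContinuousLinearMap.fst ℂ ℂ ℂ).comp (ContinuousLinearMap.snd ℂ ℂ (ℂ × ℂ))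
  have hexp : HasFDerivAt (fun q : ℂ × ℂ × ℂ => exp (c * q.2.1))
      (exp (c * p.2.1) • c • z₂) p :=
    (z₂.hasFDerivAt.const_mul c).cexp
  have h : HasFDerivAt (expField c a) _ p :=
    hexp.prodMk ((hasFDerivAt_const 0 p).prodMk (hexp.const_mul a))
  rw [h.fderiv]
  simp only [ContinuousLinearMap.prod_apply, smul_apply, ContinuousLinearMap.comp_apply,
    ContinuousLinearMap.coe_snd', ContinuousLinearMap.coe_fst', smul_eq_mul, zero_apply, expField,
    Prod.smul_mk, mul_zero, z₂]
  ext <;> ring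

lemma fderiv_scalingField_apply (p v : ℂ × ℂ × ℂ) :
    fderiv ℂ scalingField p v = (v.1, 0, v.2.2) := by
  have hid := hasFDerivAt_id (𝕜 := ℂ) p
  have h : HasFDerivAt scalingField _ p :=
    hid.fst.prodMk ((hasFDerivAt_const (1 : ℂ) p).prodMk hid.snd.snd)
  rw [h.fderiv]
  rfl

lemma fderiv_rotationField_apply (B : ℂ) (p v : ℂ × ℂ × ℂ) :
    fderiv ℂ (rotationField B) p v = (v.2.2, 0, -v.1) := by
  have hid := hasFDerivAt_id (𝕜 := ℂ) p
  have h : HasFDerivAt (rotationField B) _ p :=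
    hid.snd.snd.prodMk ((hasFDerivAt_const B p).prodMk hid.fst.neg)
  rw [h.fderiv]
  rfl

lemma lieBrk_swap (X Y : ℂ × ℂ × ℂ → ℂ × ℂ × ℂ) (p : ℂ × ℂ × ℂ) :
    lieBrk X Y p = -lieBrk Y X p :=
  (neg_sub _ _).symm

lemma lieBrk_constField_constField (d d' p : ℂ × ℂ × ℂ) :
    lieBrk (constField d) (constField d') p = 0 := by
  simp [lieBrk, fderiv_constField]

lemma lieBrk_constField_expField (d : ℂ × ℂ × ℂ) (c a : ℂ) (p : ℂ × ℂ × ℂ) :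
    lieBrk (constField d) (expField c a) p = (c * d.2.1) • expField c a p := by
  simp [lieBrk, fderiv_constField, fderiv_expField_apply, constField]

lemma lieBrk_constField_scalingField (d p : ℂ × ℂ × ℂ) :
    lieBrk (constField d) scalingField p = (d.1, 0, d.2.2) := by
  simp [lieBrk, fderiv_constField, fderiv_scalingField_apply, constField]

lemma lieBrk_constField_rotationField (d : ℂ × ℂ × ℂ) (B : ℂ) (p : ℂ × ℂ × ℂ) :
    lieBrk (constField d) (rotationField B) p = (d.2.2, 0, -d.1) := by
  simp [lieBrk, fderiv_constField, fderiv_rotationField_apply, constField]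

lemma lieBrk_expField_expField (c a c' a' : ℂ) (p : ℂ × ℂ × ℂ) :
    lieBrk (expField c a) (expField c' a') p = 0 := by
  simp [lieBrk, fderiv_expField_apply, expField]

lemma lieBrk_scalingField_expField (c a : ℂ) (p : ℂ × ℂ × ℂ) :
    lieBrk scalingField (expField c a) p = (c - 1) • expField c a p := by
  simp only [lieBrk, fderiv_expField_apply, fderiv_scalingField_apply, scalingField, mul_one,
    sub_smul, one_smul]
  rfl

lemma lieBrk_scalingField_rotationField (B : ℂ) (p : ℂ × ℂ × ℂ) :
    lieBrk scalingField (rotationField B) p = 0 := by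
  simp [lieBrk, fderiv_scalingField_apply, fderiv_rotationField_apply, scalingField,
    rotationField]

lemma lieBrk_expField_rotationField {c a B α : ℂ} (hB : c * B = a - α) (ha : a ^ 2 = -1)
    (p : ℂ × ℂ × ℂ) : lieBrk (expField c a) (rotationField B) p = α • expField c a p := by
  simp only [lieBrk, fderiv_expField_apply, fderiv_rotationField_apply, expField, rotationField,
    Prod.smul_mk, smul_eq_mul, Prod.mk_sub_mk]
  ext
  · linear_combination -exp (c * p.2.1) * hB
  · ring
  · linear_combination (-a * exp (c * p.2.1)) * hB - exp (c * p.2.1) * ha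

end VectorField3

open VectorField3 in
/-- The second-case realization (6.18) of the algebras `g_{5,35}`, together with the extra
tangent field `e6`, satisfies the stated commutation relations. -/
theorem stmt13 (lam α ε : ℝ) (hlam : lam ≠ 0) (hε : ε = 1 ∨ ε = -1)
    (B : ℂ) (hB : B = (-(α : ℂ) + I * (ε : ℂ)) / (lam : ℂ))
    (β : ℝ) (hβ : β = 1 - lam)
    (e1 e2 e3 e4 e5 e6 : ℂ × ℂ × ℂ → ℂ × ℂ × ℂ)
    (he1 : e1 = fun p => (Complex.exp ((lam : ℂ) * p.2.1), 0,
        I * (ε : ℂ) * Complex.exp ((lam : ℂ) * p.2.1)))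
    (he2 : e2 = fun _ => (1, 0, 0))
    (he3 : e3 = fun _ => (0, 0, 1))
    (he4 : e4 = fun p => (p.1, 1, p.2.2))
    (he5 : e5 = fun p => (p.2.2, B, -p.1))
    (he6 : e6 = fun p => (Complex.exp (-(lam : ℂ) * p.2.1), 0,
        -I * (ε : ℂ) * Complex.exp (-(lam : ℂ) * p.2.1))) :
    (∀ p, lieBrk e1 e4 p = (β : ℂ) • e1 p) ∧
    (∀ p, lieBrk e2 e4 p = e2 p) ∧
    (∀ p, lieBrk e3 e4 p = e3 p) ∧
    (∀ p, lieBrk e4 e6 p = ((β : ℂ) - 2) • e6 p) ∧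
    (∀ p, lieBrk e1 e5 p = (α : ℂ) • e1 p) ∧
    (∀ p, lieBrk e2 e5 p = - e3 p) ∧
    (∀ p, lieBrk e3 e5 p = e2 p) ∧
    (∀ p, lieBrk e4 e5 p = 0) ∧
    (∀ p, lieBrk e1 e2 p = 0) ∧ (∀ p, lieBrk e1 e3 p = 0) ∧ (∀ p, lieBrk e2 e3 p = 0) ∧
    (∀ p, lieBrk e1 e6 p = 0) ∧ (∀ p, lieBrk e2 e6 p = 0) ∧ (∀ p, lieBrk e3 e6 p = 0) := by
  obtain rfl : e1 = expField lam (I * ε) := he1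
  obtain rfl : e2 = constField (1, 0, 0) := he2
  obtain rfl : e3 = constField (0, 0, 1) := he3
  obtain rfl : e4 = scalingField := he4
  obtain rfl : e5 = rotationField B := he5
  obtain rfl : e6 = expField (-lam) (-I * ε) := he6
  have hβ' : (β : ℂ) = 1 - lam := by rw [hβ]; push_cast; rfl
  have hlamB : (lam : ℂ) * B = I * ε - α := by
    have hlam' : (lam : ℂ) ≠ 0 := by exact_mod_cast hlam
    rw [hB]; field_simp; ring
  have hIε : (I * ε) ^ 2 = -1 := by
    rcases hε with rfl | rfl <;> simp
  refine ⟨fun p => ?_, lieBrk_constField_scalingField _, lieBrk_constField_scalingField _,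
    fun p => ?_, lieBrk_expField_rotationField hlamB hIε, fun p => ?_, fun p => ?_,
    lieBrk_scalingField_rotationField B, fun p => ?_, fun p => ?_,
    lieBrk_constField_constField _ _, lieBrk_expField_expField _ _ _ _, fun p => ?_,
    fun p => ?_⟩
  · rw [lieBrk_swap, lieBrk_scalingField_expField, ← neg_smul, hβ', neg_sub]
  · rw [lieBrk_scalingField_expField, hβ']
    ring_nf
  · simp [lieBrk_constField_rotationField, constField]
  · simp [lieBrk_constField_rotationField, constField]
  · simp [lieBrk_swap (expField _ _), lieBrk_constField_expField]
  · simp [lieBrk_swap (expField _ _), lieBrk_constField_expField]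
  · simp [lieBrk_constField_expField]
  · simp [lieBrk_constField_expField]
end

section
/- Let B ∈ ℂ. The five holomorphic vector fields on ℂ³ given by e1 = (0,0,1), e2 = (1,0,0), e3 = (0, 1, z1 − B), e4 = (z1, z2, 2w + B z2), e5 = (z2, −z1, (z2² − z1²)/2 + B z1) satisfy the commutation relations of the Lie algebra g_{5,37}: [e1,e4] = 2 e1, [e2,e3] = e1, [e2,e4] = e2, [e2,e5] = −e3, [e3,e4] = e3, [e3,e5] = e2, [e4,e5] = 0, and all other brackets among e1,…,e5 vanish, namely [e1,e2] = [e1,e3] = [e1,e5] = 0. -/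
open Complex

noncomputable abbrev P1' : ℂ × ℂ × ℂ →L[ℂ] ℂ := ContinuousLinearMap.fst ℂ ℂ (ℂ × ℂ)
noncomputable abbrev P2' : ℂ × ℂ × ℂ →L[ℂ] ℂ :=
  (ContinuousLinearMap.fst ℂ ℂ ℂ).comp (ContinuousLinearMap.snd ℂ ℂ (ℂ × ℂ))
noncomputable abbrev P3' : ℂ × ℂ × ℂ →L[ℂ] ℂ :=
  (ContinuousLinearMap.snd ℂ ℂ ℂ).comp (ContinuousLinearMap.snd ℂ ℂ (ℂ × ℂ))

lemma hp1' (p : ℂ × ℂ × ℂ) : HasFDerivAt (fun q : ℂ × ℂ × ℂ => q.1) P1' p := hasFDerivAt_fst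
lemma hp2' (p : ℂ × ℂ × ℂ) : HasFDerivAt (fun q : ℂ × ℂ × ℂ => q.2.1) P2' p :=
  HasFDerivAt.comp p hasFDerivAt_fst hasFDerivAt_snd
lemma hp3' (p : ℂ × ℂ × ℂ) : HasFDerivAt (fun q : ℂ × ℂ × ℂ => q.2.2) P3' p :=
  HasFDerivAt.comp p hasFDerivAt_snd hasFDerivAt_snd

lemma D3' (B : ℂ) (p : ℂ × ℂ × ℂ) :
    HasFDerivAt (fun p : ℂ × ℂ × ℂ => ((0:ℂ), (1:ℂ), p.1 - B))
      ((0 : ℂ × ℂ × ℂ →L[ℂ] ℂ).prod ((0 : ℂ × ℂ × ℂ →L[ℂ] ℂ).prod P1')) p :=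
  (hasFDerivAt_const _ _).prodMk ((hasFDerivAt_const _ _).prodMk ((hp1' p).sub_const B))

lemma D4' (B : ℂ) (p : ℂ × ℂ × ℂ) :
    HasFDerivAt (fun p : ℂ × ℂ × ℂ => (p.1, p.2.1, 2 * p.2.2 + B * p.2.1))
      (P1'.prod (P2'.prod ((2:ℂ) • P3' + B • P2'))) p :=
  (hp1' p).prodMk ((hp2' p).prodMk (((hp3' p).const_mul 2).add ((hp2' p).const_mul B)))

lemma D5' (B : ℂ) (p : ℂ × ℂ × ℂ) :
    HasFDerivAt (fun p : ℂ × ℂ × ℂ => (p.2.1, -p.1, (p.2.1 ^ 2 - p.1 ^ 2) / 2 + B * p.1))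
      (P2'.prod ((-P1').prod
        ((2:ℂ)⁻¹ • ((2 * p.2.1) • P2' - (2 * p.1) • P1') + B • P1'))) p := by
  have h1 : HasFDerivAt (fun q : ℂ × ℂ × ℂ => q.2.1 ^ 2) ((2 * p.2.1) • P2') p := by
    rw [show (2 * p.2.1) • P2' = p.2.1 • P2' + p.2.1 • P2' by refine ContinuousLinearMap.ext fun v => ?_; simp; ring]
    simpa [pow_two, Pi.mul_def] using (hp2' p).mul (hp2' p)
  have h2 : HasFDerivAt (fun q : ℂ × ℂ × ℂ => q.1 ^ 2) ((2 * p.1) • P1') p := by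
    rw [show (2 * p.1) • P1' = p.1 • P1' + p.1 • P1' by refine ContinuousLinearMap.ext fun v => ?_; simp; ring]
    simpa [pow_two, Pi.mul_def] using (hp1' p).mul (hp1' p)
  have h3 : HasFDerivAt (fun q : ℂ × ℂ × ℂ => (q.2.1 ^ 2 - q.1 ^ 2) / 2 + B * q.1)
      ((2:ℂ)⁻¹ • ((2 * p.2.1) • P2' - (2 * p.1) • P1') + B • P1') p := by
    have heq : (fun q : ℂ × ℂ × ℂ => (q.2.1 ^ 2 - q.1 ^ 2) / 2 + B * q.1)
        = fun q : ℂ × ℂ × ℂ => (2:ℂ)⁻¹ * (q.2.1 ^ 2 - q.1 ^ 2) + B * q.1 := by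
      funext q; ring
    rw [heq]
    exact ((h1.sub h2).const_mul _).add ((hp1' p).const_mul B)
  exact (hp2' p).prodMk (((hp1' p).neg).prodMk h3)

/-- The first normalized basis of Proposition 5.7 realizes the Lie algebra `g_{5,37}`. -/
theorem stmt14 (B : ℂ)
    (e1 e2 e3 e4 e5 : ℂ × ℂ × ℂ → ℂ × ℂ × ℂ)
    (he1 : e1 = fun _ => (0, 0, 1))
    (he2 : e2 = fun _ => (1, 0, 0))
    (he3 : e3 = fun p => (0, 1, p.1 - B))
    (he4 : e4 = fun p => (p.1, p.2.1, 2 * p.2.2 + B * p.2.1))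
    (he5 : e5 = fun p => (p.2.1, -p.1, (p.2.1 ^ 2 - p.1 ^ 2) / 2 + B * p.1)) :
    (∀ p, lieBrk e1 e4 p = (2 : ℂ) • e1 p) ∧
    (∀ p, lieBrk e2 e3 p = e1 p) ∧
    (∀ p, lieBrk e2 e4 p = e2 p) ∧
    (∀ p, lieBrk e2 e5 p = - e3 p) ∧
    (∀ p, lieBrk e3 e4 p = e3 p) ∧
    (∀ p, lieBrk e3 e5 p = e2 p) ∧
    (∀ p, lieBrk e4 e5 p = 0) ∧
    (∀ p, lieBrk e1 e2 p = 0) ∧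
    (∀ p, lieBrk e1 e3 p = 0) ∧
    (∀ p, lieBrk e1 e5 p = 0) := by
  subst he1 he2 he3 he4 he5
  refine ⟨?_, ?_, ?_, ?_, ?_, ?_, ?_, ?_, ?_, ?_⟩ <;> intro p <;>
    simp only [lieBrk, (D3' B p).fderiv, (D4' B p).fderiv, (D5' B p).fderiv, fderiv_const,
      Pi.zero_apply, ContinuousLinearMap.zero_apply, ContinuousLinearMap.prod_apply,
      ContinuousLinearMap.add_apply, ContinuousLinearMap.smul_apply,
      ContinuousLinearMap.sub_apply, ContinuousLinearMap.neg_apply,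
      ContinuousLinearMap.coe_comp', Function.comp_apply,
      ContinuousLinearMap.coe_fst', ContinuousLinearMap.coe_snd',
      smul_eq_mul, Prod.smul_mk, Prod.mk_sub_mk, Prod.neg_mk, sub_zero, zero_sub] <;>
    refine Prod.ext ?_ (Prod.ext ?_ ?_) <;> simp <;> ring
end

section
/- Let λ ∈ ℝ \ {0}, α ∈ ℝ, ε ∈ {1,−1}, C ∈ ℝ, and define on the open set {(y1,x2,y2) : sin(λ y2) ≠ 0} the function F(y1, x2, y2) = ε·y1·cot(λ y2) − C·exp(x2 + α ε y2)/sin(λ y2). Then F satisfies all three equations: (i) sin(λ y2)·∂F/∂y1 = ε·cos(λ y2); (ii) y1·∂F/∂y1 + ∂F/∂x2 − F = 0; (iii) F·∂F/∂y1 + (1/λ)(−α·∂F/∂x2 + ε·∂F/∂y2) + y1 = 0. -/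
/-!
Writing `s = sin (λ y2)`, `c = cos (λ y2)`, `E = exp (x2 + α ε y2)`, the partial derivatives
of `F` are `∂F/∂y1 = ε c / s`, `∂F/∂x2 = -C E / s` and
`∂F/∂y2 = (C E (λ c - α ε s) - ε λ y1) / s²` (the last from `cot' = -1 / sin²`).
Equation (ii) is then a ring identity, and in (iii) the `α`-terms cancel once `ε² = 1`,
leaving `y1 (c² - 1) / s² + y1 = 0`, i.e. `s² + c² = 1`.
-/

open Real

theorem Real.hasDerivAt_cot {x : ℝ} (hx : sin x ≠ 0) : HasDerivAt cot (-1 / sin x ^ 2) x := by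
  have h := (hasDerivAt_cos x).div (hasDerivAt_sin x) hx
  rw [show (cot : ℝ → ℝ) = fun t => cos t / sin t from funext cot_eq_cos_div_sin]
  refine h.congr_deriv ?_
  rw [← sin_sq_add_cos_sq x]
  ring

noncomputable def determiningFunction (lam α ε C y1 x2 y2 : ℝ) : ℝ :=
  ε * y1 * (cos (lam * y2) / sin (lam * y2)) - C * exp (x2 + α * ε * y2) / sin (lam * y2)

section PartialDerivatives

variable (lam α ε C y1 x2 y2 : ℝ)

theorem hasDerivAt_determiningFunction_y1 :
    HasDerivAt (fun s => determiningFunction lam α ε C s x2 y2)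
      (ε * (cos (lam * y2) / sin (lam * y2))) y1 := by
  have := (((hasDerivAt_id y1).const_mul ε).mul_const (cos (lam * y2) / sin (lam * y2))).sub_const
    (C * exp (x2 + α * ε * y2) / sin (lam * y2))
  simpa [determiningFunction] using this

theorem hasDerivAt_determiningFunction_x2 :
    HasDerivAt (fun s => determiningFunction lam α ε C y1 s y2)
      (-(C * exp (x2 + α * ε * y2) / sin (lam * y2))) x2 := by
  have hexp := ((hasDerivAt_id x2).add_const (α * ε * y2)).exp
  have := ((hexp.const_mul C).div_const (sin (lam * y2))).const_sub
    (ε * y1 * (cos (lam * y2) / sin (lam * y2)))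
  simpa [determiningFunction, neg_div] using this

theorem hasDerivAt_determiningFunction_y2 (hs : sin (lam * y2) ≠ 0) :
    HasDerivAt (fun s => determiningFunction lam α ε C y1 x2 s)
      ((C * exp (x2 + α * ε * y2) * (lam * cos (lam * y2) - α * ε * sin (lam * y2)) -
        ε * lam * y1) / sin (lam * y2) ^ 2) y2 := by
  have hlin : HasDerivAt (fun s => lam * s) lam y2 := by
    simpa using (hasDerivAt_id y2).const_mul lam
  have hcot := (Real.hasDerivAt_cot hs).comp y2 hlin
  have hexp :
      HasDerivAt (fun s => exp (x2 + α * ε * s)) (exp (x2 + α * ε * y2) * (α * ε)) y2 := by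
    simpa using (((hasDerivAt_id y2).const_mul (α * ε)).const_add x2).exp
  have hquot := hexp.div hlin.sin hs
  have hF : (fun s => determiningFunction lam α ε C y1 x2 s) =
      fun s => ε * y1 * cot (lam * s) - C * (exp (x2 + α * ε * s) / sin (lam * s)) := by
    funext s
    simp only [determiningFunction, cot_eq_cos_div_sin]
    ring
  rw [hF]
  refine ((hcot.const_mul (ε * y1)).sub (hquot.const_mul C)).congr_deriv ?_
  field_simp
  ring

end PartialDerivatives

theorem stmt16_general (lam α ε C : ℝ) (hε : ε = 1 ∨ ε = -1)
    (F : ℝ → ℝ → ℝ → ℝ)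
    (hF : ∀ y1 x2 y2, F y1 x2 y2 =
        ε * y1 * (Real.cos (lam * y2) / Real.sin (lam * y2)) -
        C * Real.exp (x2 + α * ε * y2) / Real.sin (lam * y2)) :
    ∀ y1 x2 y2 : ℝ, Real.sin (lam * y2) ≠ 0 →
      (Real.sin (lam * y2) * deriv (fun s => F s x2 y2) y1 = ε * Real.cos (lam * y2)) ∧
      (y1 * deriv (fun s => F s x2 y2) y1 + deriv (fun s => F y1 s y2) x2 - F y1 x2 y2 = 0) ∧
      (F y1 x2 y2 * deriv (fun s => F s x2 y2) y1 +
        (1 / lam) * (-α * deriv (fun s => F y1 s y2) x2 + ε * deriv (fun s => F y1 x2 s) y2) +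
        y1 = 0) := by
  intro y1 x2 y2 hs
  obtain rfl : F = determiningFunction lam α ε C := by
    funext y1 x2 y2
    exact hF y1 x2 y2
  have hlam : lam ≠ 0 := by
    rintro rfl
    simp at hs
  have hε2 : ε ^ 2 = 1 := by rcases hε with rfl | rfl <;> norm_num
  rw [(hasDerivAt_determiningFunction_y1 lam α ε C y1 x2 y2).deriv,
    (hasDerivAt_determiningFunction_x2 lam α ε C y1 x2 y2).deriv,
    (hasDerivAt_determiningFunction_y2 lam α ε C y1 x2 y2 hs).deriv]
  refine ⟨by field_simp, by unfold determiningFunction; ring, ?_⟩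
  unfold determiningFunction
  set E := exp (x2 + α * ε * y2)
  field_simp
  linear_combination
    (lam * cos (lam * y2) ^ 2 * y1 - lam * y1 - C * E * sin (lam * y2) * α) * hε2 +
      lam * y1 * sin_sq_add_cos_sq (lam * y2)

/-- The function `F = ε y1 cot(λ y2) − C e^{x2+αεy2}/sin(λ y2)` satisfies the tangency
system for the homogeneous hypersurfaces associated with `g_{5,35}`. -/
theorem stmt16 (lam α ε C : ℝ) (hlam : lam ≠ 0) (hε : ε = 1 ∨ ε = -1)
    (F : ℝ → ℝ → ℝ → ℝ)
    (hF : ∀ y1 x2 y2, F y1 x2 y2 =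
        ε * y1 * (Real.cos (lam * y2) / Real.sin (lam * y2)) -
        C * Real.exp (x2 + α * ε * y2) / Real.sin (lam * y2)) :
    ∀ y1 x2 y2 : ℝ, Real.sin (lam * y2) ≠ 0 →
      (Real.sin (lam * y2) * deriv (fun s => F s x2 y2) y1 = ε * Real.cos (lam * y2)) ∧
      (y1 * deriv (fun s => F s x2 y2) y1 + deriv (fun s => F y1 s y2) x2 - F y1 x2 y2 = 0) ∧
      (F y1 x2 y2 * deriv (fun s => F s x2 y2) y1 +
        (1 / lam) * (-α * deriv (fun s => F y1 s y2) x2 + ε * deriv (fun s => F y1 x2 s) y2) +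
        y1 = 0) :=
  stmt16_general lam α ε C hε F hF
end
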